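/- For every integer k ≥ 2 and every integer m ≥ 0, the truncation error of the accelerated series for ζ(k) satisfies (ln 2 − 1/2)/(2^{m+1}(m+1)) ≤ | ζ(k) − (2^{k−1}/(2^{k−1}−1)) · ∑_{n=0}^{m} H_{n+1}^{(k−1)}/(2^{n+1}(n+1)) | ≤ 1/2^{m}. -/

import Mathlib

/-- The generalized harmonic numbers: `genH k n = H_n^{(k)}`, defined by `H_n^{(0)} = 1`
and `H_n^{(k)} = ∑_{j=1}^{n} H_j^{(k−1)}/j` for `k ≥ 1`. -/
noncomputable def genH : ℕ → ℕ → ℝ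
  | 0, _ => 1
  | (k+1), n => ∑ j ∈ Finset.Icc 1 n, genH k j / (j : ℝ)

/-!
The closed form `H_{N+1}^{(p)} = ∑_{n ≤ N} (-1)^n C(N+1, n+1) / (n+1)^p` identifies
`H_{N+1}^{(p)} / (2^{N+1} (N+1))` with the `N`-th term `2^{-N-1} ∑_{i ≤ N} C(N, i) aᵢ` of the
Euler transform of the alternating series `aᵢ = (-1)^i / (i+1)^{p+1}`. The Euler transform of an
absolutely convergent series has the same sum (Fubini on `ℕ × ℕ`, since
`∑_j C(i+j, i) 2^{-i-j-1} = 1`), and `∑ aᵢ = (1 - 2^{-p}) ζ(p+1)`. Hence the truncation error is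
`2^p / (2^p - 1)` times the tail of the accelerated series, whose `n`-th term lies between
`1 / (2^{n+1} (n+1))` and `2^{-n-1}` because `1 ≤ H_n^{(p)} ≤ n`.
-/

open Finset

@[simp] lemma genH_zero (n : ℕ) : genH 0 n = 1 := rfl

lemma genH_succ (k n : ℕ) : genH (k + 1) n = ∑ j ∈ Icc 1 n, genH k j / j := rfl

lemma genH_succ_eq_sum_range (k N : ℕ) :
    genH (k + 1) N = ∑ i ∈ range N, genH k (i + 1) / ((i : ℝ) + 1) := by
  rw [genH_succ, ← Ico_add_one_right_eq_Icc, sum_Ico_eq_sum_range]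
  simp [add_comm]

lemma genH_nonneg (k n : ℕ) : 0 ≤ genH k n := by
  induction k generalizing n with
  | zero => simp
  | succ k ih => exact sum_nonneg fun j _ ↦ div_nonneg (ih j) j.cast_nonneg

lemma one_le_genH (k : ℕ) {n : ℕ} (hn : 1 ≤ n) : 1 ≤ genH k n := by
  induction k generalizing n with
  | zero => simp
  | succ k ih =>
    rw [genH_succ]
    have h1 : genH k 1 / (1 : ℕ) ≤ ∑ j ∈ Icc 1 n, genH k j / j :=
      single_le_sum (fun j _ ↦ div_nonneg (genH_nonneg k j) j.cast_nonneg) (by simp [hn])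
    simpa using (ih le_rfl).trans (by simpa using h1)

lemma genH_le_self (k : ℕ) {n : ℕ} (hn : 1 ≤ n) : genH k n ≤ n := by
  induction k generalizing n with
  | zero => simpa using hn
  | succ k ih =>
    calc genH (k + 1) n ≤ ∑ _j ∈ Icc 1 n, (1 : ℝ) := by
          refine sum_le_sum fun j hj ↦ ?_
          have hj : 1 ≤ j := (mem_Icc.1 hj).1
          rw [div_le_one (by exact_mod_cast hj)]
          exact ih hj
      _ = n := by simp

lemma cast_choose_succ_succ_div (i n : ℕ) :
    ((i + 1).choose (n + 1) : ℝ) / ((i : ℝ) + 1) = (i.choose n : ℝ) / ((n : ℝ) + 1) := by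
  rw [div_eq_div_iff (by positivity) (by positivity)]
  exact_mod_cast (Nat.add_one_mul_choose_eq i n).symm.trans (mul_comm _ _)

lemma genH_add_one_eq_sum_choose (p N : ℕ) :
    genH p (N + 1) =
      ∑ n ∈ range (N + 1), (-1) ^ n * (N + 1).choose (n + 1) / ((n : ℝ) + 1) ^ p := by
  induction p generalizing N with
  | zero =>
    have h := Int.alternating_sum_range_choose_of_ne (n := N + 1) N.succ_ne_zero
    rw [sum_range_succ'] at h
    simp only [pow_succ, pow_zero, mul_neg_one, neg_mul, sum_neg_distrib,
      Nat.choose_zero_right, Nat.cast_one, mul_one] at h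
    have h' : ∑ n ∈ range (N + 1), ((-1) ^ n * (N + 1).choose (n + 1) : ℤ) = 1 := by linarith
    simpa using congrArg (Int.cast : ℤ → ℝ) h'.symm
  | succ p ih =>
    calc genH (p + 1) (N + 1)
        = ∑ i ∈ range (N + 1), ∑ n ∈ range (i + 1),
            (-1) ^ n * i.choose n / ((n : ℝ) + 1) ^ (p + 1) := by
          rw [genH_succ_eq_sum_range]
          refine sum_congr rfl fun i _ ↦ ?_
          rw [ih, sum_div]
          refine sum_congr rfl fun n _ ↦ ?_
          rw [pow_succ, ← div_div, div_right_comm, mul_div_assoc, mul_div_assoc,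
            cast_choose_succ_succ_div, mul_div_assoc, div_right_comm, mul_div_assoc]
      _ = ∑ n ∈ range (N + 1), ∑ i ∈ Icc n N, (-1) ^ n * i.choose n / ((n : ℝ) + 1) ^ (p + 1) :=
          sum_comm' fun i n ↦ by simp only [mem_range, mem_Icc]; omega
      _ = _ := by
          refine sum_congr rfl fun n _ ↦ ?_
          rw [← sum_div, ← mul_sum, ← Nat.cast_sum, Nat.sum_Icc_choose]

lemma hasSum_choose_mul_div_two_pow (i : ℕ) (b : ℝ) :
    HasSum (fun j : ℕ ↦ (i + j).choose i * b / 2 ^ (i + j + 1)) b := by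
  have h := (hasSum_choose_mul_geometric_of_norm_lt_one (𝕜 := ℝ) i
    (r := 2⁻¹) (by norm_num)).mul_left (b / 2 ^ (i + 1))
  rw [show b / 2 ^ (i + 1) * (1 / (1 - 2⁻¹) ^ (i + 1)) = b by norm_num [div_pow]] at h
  refine h.congr_fun fun j ↦ ?_
  rw [Nat.add_comm j i, inv_pow]
  field_simp
  ring

theorem HasSum.sum_antidiagonal {M A : Type*} [AddCommMonoid M] [TopologicalSpace M]
    [ContinuousAdd M] [RegularSpace M] [AddMonoid A] [HasAntidiagonal A]
    {f : A × A → M} {a : M} (hf : HasSum f a) :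
    HasSum (fun n ↦ ∑ ij ∈ antidiagonal n, f ij) a :=
  (HasAntidiagonal.sigmaAntidiagonalEquivProd.hasSum_iff.2 hf).sigma fun n ↦
    (antidiagonal n).hasSum f

theorem HasSum.sum_choose_mul_div_two_pow {a : ℕ → ℝ} {s : ℝ} (ha : HasSum a s) :
    HasSum (fun n ↦ ∑ i ∈ range (n + 1), n.choose i * a i / 2 ^ (n + 1)) s := by
  set F : ℕ × ℕ → ℝ := fun ij ↦ (ij.1 + ij.2).choose ij.1 * a ij.1 / 2 ^ (ij.1 + ij.2 + 1)
  have hrow (i : ℕ) : HasSum (fun j ↦ F (i, j)) (a i) := hasSum_choose_mul_div_two_pow i (a i)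
  have hrow_abs (i : ℕ) : HasSum (fun j ↦ |F (i, j)|) |a i| :=
    (hasSum_choose_mul_div_two_pow i |a i|).congr_fun fun j ↦ by simp [F, abs_div, abs_mul]
  have hF : Summable F := by
    rw [← summable_abs_iff, summable_prod_of_nonneg fun _ ↦ abs_nonneg _]
    exact ⟨fun i ↦ (hrow_abs i).summable,
      ha.summable.abs.congr fun i ↦ (hrow_abs i).tsum_eq.symm⟩
  have hFs : HasSum F s := (hF.hasSum.prod_fiberwise hrow).unique ha ▸ hF.hasSum
  refine hFs.sum_antidiagonal.congr_fun fun n ↦ ?_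
  rw [Nat.sum_antidiagonal_eq_sum_range_succ_mk]
  refine sum_congr rfl fun i hi ↦ ?_
  simp [F, Nat.add_sub_cancel' (mem_range_succ_iff.1 hi)]

lemma tsum_neg_one_pow_mul {f : ℕ → ℝ} (hf : Summable f) :
    ∑' n, (-1) ^ n * f n = ∑' n, f n - 2 * ∑' n, f (2 * n + 1) := by
  have heven : Summable fun n ↦ f (2 * n) := hf.comp_injective fun _ _ ↦ by omega
  have hodd : Summable fun n ↦ f (2 * n + 1) := hf.comp_injective fun _ _ ↦ by omega
  rw [← tsum_even_add_odd (heven.congr fun n ↦ by simp [pow_mul])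
    (hodd.neg.congr fun n ↦ by simp [pow_succ, pow_mul]), ← tsum_even_add_odd heven hodd]
  simp only [pow_mul, pow_succ, pow_zero, mul_neg, mul_one, neg_neg, one_pow, one_mul, neg_mul,
    tsum_neg]
  ring

lemma summable_one_div_add_one_pow {s : ℕ} (hs : 1 < s) :
    Summable fun n : ℕ ↦ 1 / ((n : ℝ) + 1) ^ s := by
  simpa using (summable_nat_add_iff 1).2 (Real.summable_one_div_nat_pow.2 hs)

lemma tsum_neg_one_pow_div_add_one_pow {p : ℕ} (hp : 1 ≤ p) :
    ∑' n : ℕ, (-1) ^ n / ((n : ℝ) + 1) ^ (p + 1) =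
      (1 - 1 / 2 ^ p) * ∑' n : ℕ, 1 / ((n : ℝ) + 1) ^ (p + 1) := by
  have hodd (n : ℕ) : 1 / (((2 * n + 1 : ℕ) : ℝ) + 1) ^ (p + 1) =
      1 / 2 ^ (p + 1) * (1 / ((n : ℝ) + 1) ^ (p + 1)) := by
    push_cast
    rw [show (2 * n + 1 + 1 : ℝ) = 2 * (n + 1) by ring, mul_pow]
    field_simp
  simp_rw [div_eq_mul_one_div ((-1 : ℝ) ^ _)]
  rw [tsum_neg_one_pow_mul (summable_one_div_add_one_pow (by omega)), tsum_congr hodd,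
    tsum_mul_left, pow_succ]
  field_simp

noncomputable def accelTerm (p n : ℕ) : ℝ := genH p (n + 1) / (2 ^ (n + 1) * ((n : ℝ) + 1))

lemma accelTerm_nonneg (p n : ℕ) : 0 ≤ accelTerm p n :=
  div_nonneg (genH_nonneg p (n + 1)) (by positivity)

lemma accelTerm_le (p n : ℕ) : accelTerm p n ≤ 1 / 2 ^ (n + 1) := by
  rw [accelTerm, div_le_div_iff₀ (by positivity) (by positivity), one_mul, mul_comm]
  gcongr
  exact_mod_cast genH_le_self p n.succ_pos

lemma one_div_le_accelTerm (p n : ℕ) : 1 / (2 ^ (n + 1) * ((n : ℝ) + 1)) ≤ accelTerm p n :=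
  div_le_div_of_nonneg_right (one_le_genH p n.succ_pos) (by positivity)

lemma summable_accelTerm (p : ℕ) : Summable (accelTerm p) :=
  .of_nonneg_of_le (accelTerm_nonneg p) (accelTerm_le p)
    ((summable_geometric_two.mul_left (1 / 2)).congr fun n ↦ by rw [one_div_pow, pow_succ]; ring)

lemma accelTerm_eq_sum_choose (p N : ℕ) :
    accelTerm p N =
      ∑ i ∈ range (N + 1), N.choose i * ((-1) ^ i / ((i : ℝ) + 1) ^ (p + 1)) / 2 ^ (N + 1) := by
  rw [accelTerm, genH_add_one_eq_sum_choose, sum_div]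
  refine sum_congr rfl fun i _ ↦ ?_
  rw [show (-1) ^ i * ((N + 1).choose (i + 1) : ℝ) / ((i : ℝ) + 1) ^ p / (2 ^ (N + 1) * (N + 1))
      = (-1) ^ i / ((i : ℝ) + 1) ^ p / 2 ^ (N + 1) * ((N + 1).choose (i + 1) / (N + 1)) by
        field_simp,
    cast_choose_succ_succ_div]
  field_simp
  ring

lemma hasSum_accelTerm {p : ℕ} (hp : 1 ≤ p) :
    HasSum (accelTerm p) ((1 - 1 / 2 ^ p) * ∑' n : ℕ, 1 / ((n : ℝ) + 1) ^ (p + 1)) := by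
  have hsum : Summable fun n : ℕ ↦ (-1) ^ n / ((n : ℝ) + 1) ^ (p + 1) :=
    summable_abs_iff.1 <| (summable_one_div_add_one_pow (s := p + 1) (by omega)).congr fun n ↦ by
      simp [abs_div, abs_of_nonneg (by positivity : (0 : ℝ) ≤ n + 1)]
  rw [← tsum_neg_one_pow_div_add_one_pow hp]
  exact hsum.hasSum.sum_choose_mul_div_two_pow.congr_fun (accelTerm_eq_sum_choose p)

lemma accelTerm_le_tsum_accelTerm_add (p m : ℕ) : accelTerm p m ≤ ∑' i, accelTerm p (i + m) := by
  simpa using ((summable_nat_add_iff m).2 (summable_accelTerm p)).le_tsum 0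
    fun i _ ↦ accelTerm_nonneg p (i + m)

lemma tsum_accelTerm_add_le (p m : ℕ) : ∑' i, accelTerm p (i + m) ≤ 1 / 2 ^ m :=
  calc ∑' i, accelTerm p (i + m) ≤ ∑' i : ℕ, 1 / 2 ^ m / 2 / 2 ^ i :=
        Summable.tsum_le_tsum
          (fun i ↦ (accelTerm_le p (i + m)).trans_eq (by rw [pow_succ, pow_add]; field_simp))
          ((summable_nat_add_iff m).2 (summable_accelTerm p)) (summable_geometric_two' _)
    _ = 1 / 2 ^ m := tsum_geometric_two' _

lemma zeta_sub_sum_accelTerm {p : ℕ} (hp : 1 ≤ p) (m : ℕ) :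
    (∑' n : ℕ, 1 / ((n : ℝ) + 1) ^ (p + 1)) - 2 ^ p / (2 ^ p - 1) * ∑ n ∈ range m, accelTerm p n
      = 2 ^ p / (2 ^ p - 1) * ∑' i, accelTerm p (i + m) := by
  have h2p : (1 : ℝ) < 2 ^ p := one_lt_pow₀ one_lt_two (by omega)
  have hc : 2 ^ p / (2 ^ p - 1) * (1 - 1 / 2 ^ p) = (1 : ℝ) := by
    field_simp [(sub_pos.2 h2p).ne']
  have hsplit := (summable_accelTerm p).sum_add_tsum_nat_add m
  rw [(hasSum_accelTerm hp).tsum_eq] at hsplit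
  linear_combination (-(2 ^ p / (2 ^ p - 1) : ℝ)) * hsplit
    - (∑' n : ℕ, 1 / ((n : ℝ) + 1) ^ (p + 1)) * hc

lemma log_two_sub_half_div_le (m : ℕ) :
    (Real.log 2 - 1 / 2) / (2 ^ (m + 1) * ((m : ℝ) + 1)) ≤
      1 / (2 ^ (m + 1 + 1) * (((m + 1 : ℕ) : ℝ) + 1)) := by
  have hlog : (Real.log 2 - 1 / 2) * (2 * ((m : ℝ) + 2)) ≤ m + 1 := by
    nlinarith [Real.log_two_lt_d9, m.cast_nonneg (α := ℝ)]
  rw [div_le_div_iff₀ (by positivity) (by positivity), pow_succ]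
  push_cast
  nlinarith [mul_le_mul_of_nonneg_left hlog (pow_pos two_pos (m + 1)).le]

/-- For every integer `k ≥ 2` and every integer `m ≥ 0`, the truncation
error of the accelerated series for `ζ(k) = ∑_{n=1}^{∞} 1/n^k` satisfies
`(ln 2 − 1/2)/(2^{m+1}(m+1)) ≤ |ζ(k) − (2^{k−1}/(2^{k−1}−1))·∑_{n=0}^{m} H_{n+1}^{(k−1)}/(2^{n+1}(n+1))| ≤ 1/2^m`. -/
theorem stmt12 (k m : ℕ) (hk : 2 ≤ k) :
    (Real.log 2 - 1 / 2) / (2 ^ (m + 1) * ((m : ℝ) + 1)) ≤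
      |(∑' n : ℕ, 1 / ((n : ℝ) + 1) ^ k)
        - 2 ^ (k - 1) / (2 ^ (k - 1) - 1)
          * ∑ n ∈ Finset.range (m + 1), genH (k - 1) (n + 1) / (2 ^ (n + 1) * ((n : ℝ) + 1))| ∧
    |(∑' n : ℕ, 1 / ((n : ℝ) + 1) ^ k)
        - 2 ^ (k - 1) / (2 ^ (k - 1) - 1)
          * ∑ n ∈ Finset.range (m + 1), genH (k - 1) (n + 1) / (2 ^ (n + 1) * ((n : ℝ) + 1))|
      ≤ 1 / 2 ^ m := by
  obtain ⟨p, rfl⟩ : ∃ p, k = p + 1 := ⟨k - 1, by omega⟩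
  have hp : 1 ≤ p := by omega
  have h2p : (2 : ℝ) ≤ 2 ^ p := by simpa using pow_le_pow_right₀ one_le_two hp
  have hc1 : (1 : ℝ) ≤ 2 ^ p / (2 ^ p - 1) := by rw [le_div_iff₀ (by linarith)]; linarith
  have hc2 : 2 ^ p / (2 ^ p - 1) ≤ (2 : ℝ) := by rw [div_le_iff₀ (by linarith)]; linarith
  have hT : 0 ≤ ∑' i, accelTerm p (i + (m + 1)) :=
    tsum_nonneg fun i ↦ accelTerm_nonneg p (i + (m + 1))
  rw [Nat.add_sub_cancel]
  erw [zeta_sub_sum_accelTerm hp (m + 1), abs_of_nonneg (by positivity)]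
  constructor
  · calc (Real.log 2 - 1 / 2) / (2 ^ (m + 1) * ((m : ℝ) + 1))
        ≤ 1 / (2 ^ (m + 1 + 1) * (((m + 1 : ℕ) : ℝ) + 1)) := log_two_sub_half_div_le m
      _ ≤ accelTerm p (m + 1) := one_div_le_accelTerm p (m + 1)
      _ ≤ ∑' i, accelTerm p (i + (m + 1)) := accelTerm_le_tsum_accelTerm_add p (m + 1)
      _ ≤ _ := le_mul_of_one_le_left hT hc1
  · calc _ ≤ 2 * (1 / 2 ^ (m + 1) : ℝ) :=
          mul_le_mul hc2 (tsum_accelTerm_add_le p (m + 1)) hT zero_le_two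
      _ = 1 / 2 ^ m := by rw [pow_succ]; field_simp
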